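/- Fix a finite independent exchange model in which ρ(e) + (1 − ρ(e))·φQ(e) ≤ φN(e) for every e ∈ E. Then with the failure-aware matching policy, the single-stage objective is monotonic in the set of queried edges: for all q, q'' ⊆ E with q ⊆ q'', V^FA(q) ≤ V^FA(q''). -/

import Mathlib

/-- A structure in an exchange is either a cycle or a chain. -/
inductive StructKind : Type
  | cycle : StructKind
  | chain : StructKind
  deriving DecidableEq

/-- A structure: a list of edges together with a cycle/chain tag. -/
abbrev ExchangeStruct (E : Type) := List E × StructKind

/-- A finite independent exchange model: a finite edge set `E`, nonnegative edge
weights `w`, a finite set `structs` of structures (lists of distinct edges tagged as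
cycles or chains), a nonempty finite collection `matchings` of feasible matchings
(subsets of `structs`), and per-edge probabilities `ρ e` (rejection if queried),
`φQ e` (post-match failure if queried and accepted), `φN e` (post-match failure if
not queried), all in `[0,1]`; all edges are independent. -/
structure ExchangeModel (E : Type) [Fintype E] [DecidableEq E] where
  w : E → ℝ
  w_nonneg : ∀ e, 0 ≤ w e
  structs : Finset (ExchangeStruct E)
  structs_nodup : ∀ c ∈ structs, c.1.Nodup
  matchings : Finset (Finset (ExchangeStruct E))
  matchings_nonempty : matchings.Nonempty
  matchings_sub : ∀ x ∈ matchings, x ⊆ structs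
  ρ : E → ℝ
  φQ : E → ℝ
  φN : E → ℝ
  ρ_mem : ∀ e, ρ e ∈ Set.Icc (0 : ℝ) 1
  φQ_mem : ∀ e, φQ e ∈ Set.Icc (0 : ℝ) 1
  φN_mem : ∀ e, φN e ∈ Set.Icc (0 : ℝ) 1

variable {E : Type} [Fintype E] [DecidableEq E]

/-- Expected final weight of a chain with edge list `es`:
`Σ_{k} w (e_k) · Π_{j ≤ k} s (e_j)`. -/
def chainVal (w s : E → ℝ) : List E → ℝ
  | [] => 0
  | e :: es => s e * (w e + chainVal w s es)

/-- Expected final weight `G c s` of a structure `c` under per-edge success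
probabilities `s`. -/
def structVal (w s : E → ℝ) (c : ExchangeStruct E) : ℝ :=
  match c.2 with
  | .cycle => (c.1.map w).sum * (c.1.map s).prod
  | .chain => chainVal w s c.1

/-- Per-edge success probabilities `s_{q,r}` for query set `q` and rejection set `r`. -/
def succProb (M : ExchangeModel E) (q r : Finset E) : E → ℝ :=
  fun e => if e ∈ r then 0 else if e ∈ q then 1 - M.φQ e else 1 - M.φN e

/-- Probability `P_q r` of rejection set `r ⊆ q`. -/
def rejProb (M : ExchangeModel E) (q r : Finset E) : ℝ :=
  (∏ e ∈ r, M.ρ e) * ∏ e ∈ q \ r, (1 - M.ρ e)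

/-- Expected final weight of a matching `x` under success probabilities `s`. -/
def matchVal (M : ExchangeModel E) (s : E → ℝ) (x : Finset (ExchangeStruct E)) : ℝ :=
  ∑ c ∈ x, structVal M.w s c

/-- The failure-aware optimal expected matching weight `max_{x ∈ M} Σ_{c ∈ x} G(c, s)`. -/
def bestVal (M : ExchangeModel E) (s : E → ℝ) : ℝ :=
  M.matchings.sup' M.matchings_nonempty (matchVal M s)

/-- The failure-aware value `V^FA q` of a query set `q`. -/
def VFA (M : ExchangeModel E) (q : Finset E) : ℝ :=
  ∑ r ∈ q.powerset, rejProb M q r * bestVal M (succProb M q r)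

/-- Nominal weight of (the edge list of) a chain under rejection set `r`: the summed
weight of all edges preceding the first rejected edge. -/
def chainNominal (w : E → ℝ) (r : Finset E) : List E → ℝ
  | [] => 0
  | e :: es => if e ∈ r then 0 else w e + chainNominal w r es

/-- Nominal weight `F c r` of a structure `c` under rejection set `r`. -/
def nominalVal (w : E → ℝ) (r : Finset E) (c : ExchangeStruct E) : ℝ :=
  match c.2 with
  | .cycle => if ∀ e ∈ c.1, e ∉ r then (c.1.map w).sum else 0
  | .chain => chainNominal w r c.1

/-- `m` is a max-weight selection for query set `q`: to each rejection set `r ⊆ q` it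
assigns a feasible matching maximizing the nominal weight `Σ_{c ∈ x} F(c, r)`. -/
def IsMaxWeightSelection (M : ExchangeModel E) (q : Finset E)
    (m : Finset E → Finset (ExchangeStruct E)) : Prop :=
  ∀ r ∈ q.powerset, m r ∈ M.matchings ∧
    ∀ x ∈ M.matchings, ∑ c ∈ x, nominalVal M.w r c ≤ ∑ c ∈ m r, nominalVal M.w r c

/-- The max-weight value `V^MAX (q; m)` of query set `q` under max-weight selection `m`. -/
def VMAX (M : ExchangeModel E) (q : Finset E)
    (m : Finset E → Finset (ExchangeStruct E)) : ℝ :=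
  ∑ r ∈ q.powerset, rejProb M q r * ∑ c ∈ m r, structVal M.w (succProb M q r) c

/-! The idea: add queried edges one at a time. Fix a rejection set `r ⊆ q` and a new edge
`e ∉ q`; every other edge keeps its success probability, so each `G(c, ·)` is an affine function
of the success probability `t` of `e`, with nonnegative slope (edges of a structure are distinct).
Hence `bestVal` is a convex, nondecreasing function of `t`. Not querying `e` gives
`t = 1 - φN e`; querying it gives `t = 0` with probability `ρ e` and `t = 1 - φQ e` otherwise. The
hypothesis says `1 - φN e ≤ (1 - ρ e) (1 - φQ e)`, the mean of the latter, so monotonicity and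
Jensen's inequality give the claim. -/

def IsMonotoneAffine (f : ℝ → ℝ) : Prop :=
  ∃ a b : ℝ, 0 ≤ b ∧ ∀ t, f t = a + b * t

namespace IsMonotoneAffine

lemma const (a : ℝ) : IsMonotoneAffine fun _ => a :=
  ⟨a, 0, le_rfl, fun _ => by ring⟩

lemma mul_const {b : ℝ} (hb : 0 ≤ b) : IsMonotoneAffine fun t => t * b :=
  ⟨0, b, hb, fun _ => by ring⟩

lemma const_mul {f : ℝ → ℝ} (hf : IsMonotoneAffine f) {c : ℝ} (hc : 0 ≤ c) :
    IsMonotoneAffine fun t => c * f t := by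
  obtain ⟨a, b, hb, hf⟩ := hf
  exact ⟨c * a, c * b, mul_nonneg hc hb, fun t => show c * f t = _ by rw [hf]; ring⟩

lemma const_add {f : ℝ → ℝ} (hf : IsMonotoneAffine f) (c : ℝ) :
    IsMonotoneAffine fun t => c + f t := by
  obtain ⟨a, b, hb, hf⟩ := hf
  exact ⟨c + a, b, hb, fun t => show c + f t = _ by rw [hf]; ring⟩

lemma finset_sum {ι : Type*} (s : Finset ι) {f : ι → ℝ → ℝ}
    (hf : ∀ i ∈ s, IsMonotoneAffine (f i)) : IsMonotoneAffine fun t => ∑ i ∈ s, f i t := by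
  choose! a b hb hf using hf
  refine ⟨∑ i ∈ s, a i, ∑ i ∈ s, b i, Finset.sum_nonneg hb, fun t => ?_⟩
  rw [Finset.sum_mul, ← Finset.sum_add_distrib]
  exact Finset.sum_congr rfl fun i hi => hf i hi t

lemma le_combination {f : ℝ → ℝ} (hf : IsMonotoneAffine f) {ρ t₀ t₁ : ℝ}
    (ht : t₀ ≤ (1 - ρ) * t₁) : f t₀ ≤ ρ * f 0 + (1 - ρ) * f t₁ := by
  obtain ⟨a, b, hb, hf⟩ := hf
  rw [hf, hf, hf]
  nlinarith [mul_le_mul_of_nonneg_left ht hb]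

end IsMonotoneAffine

section Lists

variable {α : Type}

lemma chainVal_nonneg {w s : α → ℝ} (hw : ∀ x, 0 ≤ w x) (hs : ∀ x, 0 ≤ s x) :
    ∀ l : List α, 0 ≤ chainVal w s l
  | [] => le_rfl
  | e :: l => mul_nonneg (hs e) (add_nonneg (hw e) (chainVal_nonneg hw hs l))

lemma chainVal_congr (w : α → ℝ) {s s' : α → ℝ} :
    ∀ {l : List α}, (∀ x ∈ l, s x = s' x) → chainVal w s l = chainVal w s' l
  | [], _ => rfl
  | e :: _, h => by
    simp only [chainVal, h e List.mem_cons_self,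
      chainVal_congr w fun x hx => h x (List.mem_cons_of_mem e hx)]

variable [DecidableEq α]

lemma update_eqOn_of_notMem {β : Type*} (s : α → β) {e : α} {l : List α} (he : e ∉ l)
    (t : β) : ∀ x ∈ l, Function.update s e t x = s x :=
  fun _ hx => Function.update_of_ne (ne_of_mem_of_not_mem hx he) t s

lemma isMonotoneAffine_prod_map_update {s : α → ℝ} (hs : ∀ x, 0 ≤ s x) (e : α) :
    ∀ {l : List α}, l.Nodup → IsMonotoneAffine fun t => (l.map (Function.update s e t)).prod
  | [], _ => IsMonotoneAffine.const 1
  | f :: l, hl => by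
    obtain ⟨hf, hl⟩ := List.nodup_cons.mp hl
    simp only [List.map_cons, List.prod_cons]
    rcases eq_or_ne f e with rfl | hfe
    · simp only [Function.update_self, List.map_congr_left (update_eqOn_of_notMem s hf _)]
      exact IsMonotoneAffine.mul_const (List.prod_nonneg (by simpa using fun x _ => hs x))
    · simp only [Function.update_of_ne hfe]
      exact (isMonotoneAffine_prod_map_update hs e hl).const_mul (hs f)

lemma isMonotoneAffine_chainVal_update {w s : α → ℝ} (hw : ∀ x, 0 ≤ w x)
    (hs : ∀ x, 0 ≤ s x) (e : α) :
    ∀ {l : List α}, l.Nodup → IsMonotoneAffine fun t => chainVal w (Function.update s e t) l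
  | [], _ => IsMonotoneAffine.const 0
  | f :: l, hl => by
    obtain ⟨hf, hl⟩ := List.nodup_cons.mp hl
    simp only [chainVal]
    rcases eq_or_ne f e with rfl | hfe
    · simp only [Function.update_self, chainVal_congr w (update_eqOn_of_notMem s hf _)]
      exact IsMonotoneAffine.mul_const (add_nonneg (hw f) (chainVal_nonneg hw hs l))
    · simp only [Function.update_of_ne hfe]
      exact ((isMonotoneAffine_chainVal_update hw hs e hl).const_add (w f)).const_mul (hs f)

lemma isMonotoneAffine_structVal_update {w s : α → ℝ} (hw : ∀ x, 0 ≤ w x)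
    (hs : ∀ x, 0 ≤ s x) (e : α) {c : ExchangeStruct α} (hc : c.1.Nodup) :
    IsMonotoneAffine fun t => structVal w (Function.update s e t) c := by
  obtain ⟨l, _ | _⟩ := c
  · exact (isMonotoneAffine_prod_map_update hs e hc).const_mul
      (List.sum_nonneg (by simpa using fun x _ => hw x))
  · exact isMonotoneAffine_chainVal_update hw hs e hc

end Lists

section Model

variable (M : ExchangeModel E)

lemma succProb_nonneg (q r : Finset E) (x : E) : 0 ≤ succProb M q r x := by
  unfold succProb
  split_ifs
  · exact le_rfl
  · linarith [(M.φQ_mem x).2]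
  · linarith [(M.φN_mem x).2]

lemma rejProb_nonneg (q r : Finset E) : 0 ≤ rejProb M q r :=
  mul_nonneg (Finset.prod_nonneg fun e _ => (M.ρ_mem e).1)
    (Finset.prod_nonneg fun e _ => sub_nonneg.2 (M.ρ_mem e).2)

variable {M} in
lemma isMonotoneAffine_matchVal_update {s : E → ℝ} (hs : ∀ x, 0 ≤ s x) (e : E)
    {x : Finset (ExchangeStruct E)} (hx : x ∈ M.matchings) :
    IsMonotoneAffine fun t => matchVal M (Function.update s e t) x :=
  IsMonotoneAffine.finset_sum x fun c hc => isMonotoneAffine_structVal_update M.w_nonneg hs e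
    (M.structs_nodup c (M.matchings_sub x hx hc))

lemma bestVal_update_le {s : E → ℝ} (hs : ∀ x, 0 ≤ s x) (e : E) {ρ t₀ t₁ : ℝ}
    (hρ₀ : 0 ≤ ρ) (hρ₁ : ρ ≤ 1) (ht : t₀ ≤ (1 - ρ) * t₁) :
    bestVal M (Function.update s e t₀) ≤
      ρ * bestVal M (Function.update s e 0) + (1 - ρ) * bestVal M (Function.update s e t₁) :=
  Finset.sup'_le _ _ fun _ hx =>
    ((isMonotoneAffine_matchVal_update hs e hx).le_combination ht).trans <|
      add_le_add (mul_le_mul_of_nonneg_left (Finset.le_sup' _ hx) hρ₀)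
        (mul_le_mul_of_nonneg_left (Finset.le_sup' _ hx) (sub_nonneg.2 hρ₁))

variable {q r : Finset E} {e : E}

lemma update_succProb_of_notMem (hq : e ∉ q) (hr : e ∉ r) :
    Function.update (succProb M q r) e (1 - M.φN e) = succProb M q r :=
  Function.update_eq_self_iff.2 (by simp [succProb, hq, hr])

lemma succProb_insert_of_notMem (hr : e ∉ r) :
    succProb M (insert e q) r = Function.update (succProb M q r) e (1 - M.φQ e) := by
  funext x
  rcases eq_or_ne x e with rfl | hx
  · simp [succProb, hr]
  · simp [succProb, hx]

lemma succProb_insert_insert :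
    succProb M (insert e q) (insert e r) = Function.update (succProb M q r) e 0 := by
  funext x
  rcases eq_or_ne x e with rfl | hx
  · simp [succProb]
  · simp [succProb, hx]

lemma rejProb_insert_of_notMem (hq : e ∉ q) (hr : e ∉ r) :
    rejProb M (insert e q) r = (1 - M.ρ e) * rejProb M q r := by
  rw [rejProb, rejProb, Finset.insert_sdiff_of_notMem _ hr,
    Finset.prod_insert fun h => hq (Finset.sdiff_subset h)]
  ring

lemma rejProb_insert_insert (hq : e ∉ q) (hr : e ∉ r) :
    rejProb M (insert e q) (insert e r) = M.ρ e * rejProb M q r := by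
  rw [rejProb, rejProb, Finset.insert_sdiff_insert, Finset.sdiff_insert_of_notMem hq,
    Finset.prod_insert hr]
  ring

lemma VFA_le_VFA_insert (h : ∀ e, M.ρ e + (1 - M.ρ e) * M.φQ e ≤ M.φN e) (hq : e ∉ q) :
    VFA M q ≤ VFA M (insert e q) := by
  rw [VFA, VFA, Finset.sum_powerset_insert hq, ← Finset.sum_add_distrib]
  refine Finset.sum_le_sum fun r hrq => ?_
  have hr : e ∉ r := fun he => hq (Finset.mem_powerset.mp hrq he)
  set s := succProb M q r
  rw [succProb_insert_of_notMem M hr, succProb_insert_insert, rejProb_insert_of_notMem M hq hr,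
    rejProb_insert_insert M hq hr]
  have hφ : 1 - M.φN e ≤ (1 - M.ρ e) * (1 - M.φQ e) := by linarith [h e]
  calc rejProb M q r * bestVal M s
      = rejProb M q r * bestVal M (Function.update s e (1 - M.φN e)) := by
        rw [update_succProb_of_notMem M hq hr]
    _ ≤ rejProb M q r * (M.ρ e * bestVal M (Function.update s e 0) +
          (1 - M.ρ e) * bestVal M (Function.update s e (1 - M.φQ e))) :=
        mul_le_mul_of_nonneg_left (bestVal_update_le M (succProb_nonneg M q r) e
          (M.ρ_mem e).1 (M.ρ_mem e).2 hφ) (rejProb_nonneg M q r)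
    _ = _ := by ring

end Model

/-- With the failure-aware matching policy, if querying cannot increase any edge's
overall probability of rejection or failure (`ρ e + (1 - ρ e) · φQ e ≤ φN e` for all
`e`), then the single-stage objective is monotonic in the set of queried edges. -/
theorem VFA_monotone
    (M : ExchangeModel E)
    (h : ∀ e, M.ρ e + (1 - M.ρ e) * M.φQ e ≤ M.φN e)
    (q q'' : Finset E) (hsub : q ⊆ q'') :
    VFA M q ≤ VFA M q'' := by
  have hmono : Monotone (VFA M) := Finset.monotone_iff_forall_le_cons.2 fun q e he => by
    rw [Finset.cons_eq_insert]
    exact VFA_le_VFA_insert M h he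
  exact hmono hsub
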